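/- For V_13 with 1/2 < a ≤ 1: if x⁽⁰⁾ ∈ S² with 0 < x₁⁽⁰⁾ < 1, then the trajectory x⁽ⁿ⁾ = V_13ⁿ(x⁽⁰⁾) converges to e₁ = (1,0,0). -/
import Mathlib


def V13 (a : ℝ) (p : ℝ × ℝ × ℝ) : ℝ × ℝ × ℝ :=
  (p.1^2 + 2*a*p.1*(1-p.1), p.2.1^2 + 2*p.2.1*p.2.2, p.2.2^2 + 2*(1-a)*p.1*(1-p.1))

def S2 : Set (ℝ × ℝ × ℝ) :=
  {p | 0 ≤ p.1 ∧ 0 ≤ p.2.1 ∧ 0 ≤ p.2.2 ∧ p.1 + p.2.1 + p.2.2 = 1}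

theorem V13_converges_e1 (a : ℝ) (ha : a ∈ Set.Ioc (1/2 : ℝ) 1)
    (x : ℝ × ℝ × ℝ) (hx : x ∈ S2) (h1 : 0 < x.1) (h2 : x.1 < 1) :
    Filter.Tendsto (fun n => (V13 a)^[n] x) Filter.atTop
      (nhds ((1:ℝ), (0:ℝ), (0:ℝ))) := by
  obtain ⟨ha1, ha2⟩ := ha
  obtain ⟨hx1, hx2, hx3, hsum⟩ := hx
  set y := fun n => (V13 a)^[n] x with hy
  have hstep : ∀ n, y (n+1) = V13 a (y n) := fun n => Function.iterate_succ_apply' _ _ _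
  -- invariant
  have inv : ∀ n, 0 ≤ (y n).1 ∧ 0 ≤ (y n).2.1 ∧ 0 ≤ (y n).2.2 ∧
      (y n).1 + (y n).2.1 + (y n).2.2 = 1 ∧ x.1 ≤ (y n).1 ∧ (y n).1 < 1 := by
    intro n
    induction n with
    | zero => exact ⟨hx1, hx2, hx3, hsum, le_refl _, h2⟩
    | succ n ih =>
      obtain ⟨p1, p2, p3, ps, pl, pu⟩ := ih
      rw [hstep]
      simp only [V13]
      have hq1 : 0 ≤ (y n).1 * (1 - (y n).1) := mul_nonneg p1 (by linarith)
      have hq2 : (2*a-1) * (y n).1 ≤ (y n).1 := mul_le_of_le_one_left p1 (by linarith)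
      refine ⟨by nlinarith, by nlinarith, by nlinarith [mul_nonneg (by linarith : (0:ℝ) ≤ 1 - a) hq1],
        by nlinarith, by nlinarith [mul_nonneg hq1 (by linarith : (0:ℝ) ≤ 2*a - 1)], ?_⟩
      nlinarith [mul_pos (by linarith : (0:ℝ) < 1 - (y n).1) (by linarith : (0:ℝ) < 1 - (2*a-1)*(y n).1)]
  set r := 1 - (2*a-1)*x.1 with hr
  have hr0 : 0 ≤ r := by nlinarith
  have hr1 : r < 1 := by nlinarith
  -- decay
  have decay : ∀ n, 1 - (y n).1 ≤ (1 - x.1) * r ^ n := by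
    intro n
    induction n with
    | zero => simp [hy]
    | succ n ih =>
      obtain ⟨p1, p2, p3, ps, pl, pu⟩ := inv n
      have key : 1 - (y (n+1)).1 = (1 - (y n).1) * (1 - (2*a-1)*(y n).1) := by
        rw [hstep]; simp only [V13]; ring
      have h2' : 1 - (2*a-1)*(y n).1 ≤ r := by nlinarith
      have h3' : 0 ≤ 1 - (y n).1 := by linarith
      calc 1 - (y (n+1)).1 = (1 - (y n).1) * (1 - (2*a-1)*(y n).1) := key
        _ ≤ (1 - (y n).1) * r := mul_le_mul_of_nonneg_left h2' h3'
        _ ≤ ((1 - x.1) * r ^ n) * r := mul_le_mul_of_nonneg_right ih hr0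
        _ = (1 - x.1) * r ^ (n+1) := by ring
  have hrn : Filter.Tendsto (fun n => (1 - x.1) * r ^ n) Filter.atTop (nhds 0) := by
    simpa using (tendsto_pow_atTop_nhds_zero_of_lt_one hr0 hr1).const_mul (1 - x.1)
  have t1 : Filter.Tendsto (fun n => (y n).1) Filter.atTop (nhds 1) := by
    have hlow : ∀ n, 1 - (1 - x.1) * r ^ n ≤ (y n).1 := fun n => by linarith [decay n]
    have hup : ∀ n, (y n).1 ≤ 1 := fun n => le_of_lt (inv n).2.2.2.2.2
    have : Filter.Tendsto (fun n => 1 - (1 - x.1) * r ^ n) Filter.atTop (nhds 1) := by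
      simpa using (tendsto_const_nhds (x := (1:ℝ))).sub hrn
    exact tendsto_of_tendsto_of_tendsto_of_le_of_le this tendsto_const_nhds hlow hup
  have t2 : Filter.Tendsto (fun n => (y n).2.1) Filter.atTop (nhds 0) := by
    refine tendsto_of_tendsto_of_tendsto_of_le_of_le tendsto_const_nhds hrn
      (fun n => (inv n).2.1) (fun n => ?_)
    obtain ⟨p1, p2, p3, ps, pl, pu⟩ := inv n
    linarith [decay n]
  have t3 : Filter.Tendsto (fun n => (y n).2.2) Filter.atTop (nhds 0) := by
    refine tendsto_of_tendsto_of_tendsto_of_le_of_le tendsto_const_nhds hrn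
      (fun n => (inv n).2.2.1) (fun n => ?_)
    obtain ⟨p1, p2, p3, ps, pl, pu⟩ := inv n
    linarith [decay n]
  exact t1.prodMk_nhds (t2.prodMk_nhds t3)
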